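/- arXiv:2407.02021 — 2 statements merged into one kernel-verified Lean document; each statement's English description precedes it below -/
import Mathlib

section
/- Let R be an LG-ring, let n ≥ 1, and let U be an open subscheme of affine n-space 𝔸ⁿ_R = Spec R[X₁,…,Xₙ] which is quasi-compact. Then U has an R-point (a morphism Spec R → U over Spec R) if and only if for every maximal ideal 𝔪 of R the scheme U has an (R/𝔪)-point (a morphism Spec(R/𝔪) → U over Spec R). -/
/-!
A quasi-compact open `U ⊆ 𝔸ⁿ_R` is the complement of `V(f₁, …, f_k)`. A point `a ∈ Sⁿ` over a
ring `S` lies in `U` iff the `fᵢ(a)` generate the unit ideal of `S`, i.e. iff `∑ yᵢ fᵢ(a)` is a unit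
for some `y ∈ Sᵏ`. So `U` has an `S`-point iff the polynomial `∑ Yᵢ fᵢ(X)` in `n + k` variables
represents a unit over `S`, and the LG property passes this from the residue fields to `R`.
-/

open AlgebraicGeometry CategoryTheory

universe u

/-- A commutative ring `R` is an LG-ring ("local-global ring") if every multivariate
polynomial over `R` that represents a unit over every residue field `R/𝔪` at a maximal
ideal `𝔪` already represents a unit over `R`. -/
def IsLGRing (R : Type*) [CommRing R] : Prop :=
  ∀ n : ℕ, 1 ≤ n → ∀ f : MvPolynomial (Fin n) R,
    (∀ 𝔪 : Ideal R, 𝔪.IsMaximal →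
      ∃ v : Fin n → R ⧸ 𝔪, IsUnit (MvPolynomial.eval v
        (MvPolynomial.map (Ideal.Quotient.mk 𝔪) f))) →
    ∃ u : Fin n → R, IsUnit (MvPolynomial.eval u f)

universe v

open MvPolynomial

theorem Ideal.span_range_eq_top_iff_exists_isUnit_sum {S ι : Type*} [CommRing S] [Fintype ι]
    (c : ι → S) : Ideal.span (Set.range c) = ⊤ ↔ ∃ y : ι → S, IsUnit (∑ i, y i * c i) := by
  constructor
  · intro h
    obtain ⟨y, hy⟩ := Ideal.mem_span_range_iff_exists_fun.mp ((Ideal.eq_top_iff_one _).mp h)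
    exact ⟨y, hy ▸ isUnit_one⟩
  · rintro ⟨y, hy⟩
    exact Ideal.eq_top_of_isUnit_mem _ (Ideal.mem_span_range_iff_exists_fun.mpr ⟨y, rfl⟩) hy

theorem PrimeSpectrum.range_comap_subset_compl_zeroLocus_iff {A S : Type*} [CommRing A]
    [CommRing S] (φ : A →+* S) (s : Set A) :
    Set.range (PrimeSpectrum.comap φ) ⊆ (zeroLocus s)ᶜ ↔ Ideal.span (φ '' s) = ⊤ := by
  rw [Set.range_subset_iff, ← zeroLocus_empty_iff_eq_top, zeroLocus_span,
    ← preimage_comap_zeroLocus, Set.eq_empty_iff_forall_notMem]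
  rfl

namespace MvPolynomial

variable {R S σ ι : Type*} [CommRing R] [CommRing S] [Fintype ι]

noncomputable def genericCombination (f : ι → MvPolynomial σ R) : MvPolynomial (σ ⊕ ι) R :=
  ∑ i, X (Sum.inr i) * rename Sum.inl (f i)

theorem eval₂_genericCombination (g : R →+* S) (f : ι → MvPolynomial σ R) (a : σ → S)
    (y : ι → S) :
    eval₂ g (Sum.elim a y) (genericCombination f) = ∑ i, y i * eval₂ g a (f i) := by
  simp [genericCombination, eval₂_rename, Function.comp_def]

end MvPolynomial

namespace IsLGRing

variable {R : Type*} [CommRing R] {σ : Type*} [Fintype σ] [Nonempty σ]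

theorem exists_isUnit_eval (hR : IsLGRing R) (f : MvPolynomial σ R)
    (h : ∀ 𝔪 : Ideal R, 𝔪.IsMaximal →
      ∃ v : σ → R ⧸ 𝔪, IsUnit (eval v (map (Ideal.Quotient.mk 𝔪) f))) :
    ∃ u : σ → R, IsUnit (eval u f) := by
  let e := Fintype.equivFin σ
  obtain ⟨u, hu⟩ := hR (Fintype.card σ) Fintype.card_pos (rename e f) fun 𝔪 h𝔪 => by
    obtain ⟨v, hv⟩ := h 𝔪 h𝔪
    exact ⟨v ∘ e.symm, by simpa [map_rename, eval_rename, Function.comp_def] using hv⟩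
  exact ⟨u ∘ e, by simpa [eval_rename] using hu⟩

theorem exists_span_eval_eq_top (hR : IsLGRing R) {ι : Type*} [Fintype ι]
    (f : ι → MvPolynomial σ R)
    (h : ∀ 𝔪 : Ideal R, 𝔪.IsMaximal → ∃ v : σ → R ⧸ 𝔪,
      Ideal.span (Set.range fun i => eval₂ (Ideal.Quotient.mk 𝔪) v (f i)) = ⊤) :
    ∃ a : σ → R, Ideal.span (Set.range fun i => eval a (f i)) = ⊤ := by
  obtain ⟨u, hu⟩ := hR.exists_isUnit_eval (genericCombination f) fun 𝔪 h𝔪 => by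
    obtain ⟨v, hv⟩ := h 𝔪 h𝔪
    obtain ⟨y, hy⟩ := (Ideal.span_range_eq_top_iff_exists_isUnit_sum _).mp hv
    exact ⟨Sum.elim v y, by rwa [MvPolynomial.eval_map, eval₂_genericCombination]⟩
  refine ⟨u ∘ Sum.inl, (Ideal.span_range_eq_top_iff_exists_isUnit_sum _).mpr ⟨u ∘ Sum.inr, ?_⟩⟩
  rw [← Sum.elim_comp_inl_inr u] at hu
  exact eval₂_genericCombination (RingHom.id R) f _ _ ▸ hu

end IsLGRing

theorem AlgebraicGeometry.Scheme.Opens.exists_lift_comp_spec_map_eq_iff {R A S : CommRingCat}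
    (U : (Spec A).Opens) (ι : R ⟶ A) (σ : R ⟶ S) :
    (∃ s : Spec S ⟶ U.toScheme, s ≫ U.ι ≫ Spec.map ι = Spec.map σ) ↔
      ∃ φ : A ⟶ S, ι ≫ φ = σ ∧ Set.range (Spec.map φ) ⊆ U := by
  constructor
  · rintro ⟨s, hs⟩
    obtain ⟨φ, hφ⟩ := Spec.map_surjective (s ≫ U.ι)
    refine ⟨φ, Spec.map_injective ?_, ?_⟩
    · rw [Spec.map_comp, hφ, Category.assoc, hs]
    · rw [hφ, ← U.range_ι, Scheme.Hom.comp_base, TopCat.coe_comp]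
      exact Set.range_comp_subset_range _ _
  · rintro ⟨φ, hφ, hrange⟩
    refine ⟨IsOpenImmersion.lift U.ι (Spec.map φ) (by rwa [U.range_ι]), ?_⟩
    rw [IsOpenImmersion.lift_fac_assoc, ← Spec.map_comp, hφ]

-- The universe `max u v` lets `σ = Fin n : Type` index the variables of a ring in `Type u`.
theorem MvPolynomial.exists_spec_lift_iff_span_eval₂_eq_top {R S : Type max u v} {σ : Type v}
    {ι : Type*} [CommRing R] [CommRing S] (g : R →+* S) (f : ι → MvPolynomial σ R)
    (U : (Spec (CommRingCat.of (MvPolynomial σ R))).Opens)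
    (hU : (U : Set (Spec (CommRingCat.of (MvPolynomial σ R)))) =
      (PrimeSpectrum.zeroLocus (Set.range f))ᶜ) :
    (∃ s : Spec (CommRingCat.of S) ⟶ U.toScheme,
        s ≫ U.ι ≫ Spec.map (CommRingCat.ofHom (algebraMap R (MvPolynomial σ R))) =
          Spec.map (CommRingCat.ofHom g)) ↔
      ∃ v : σ → S, Ideal.span (Set.range fun i => eval₂ g v (f i)) = ⊤ := by
  have range_subset_iff (φ : MvPolynomial σ R →+* S) :
      Set.range (Spec.map (CommRingCat.ofHom φ)) ⊆ U ↔
        Ideal.span (Set.range fun i => φ (f i)) = ⊤ := by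
    rw [hU]
    have := PrimeSpectrum.range_comap_subset_compl_zeroLocus_iff φ (Set.range f)
    rwa [← Set.range_comp] at this
  rw [Scheme.Opens.exists_lift_comp_spec_map_eq_iff]
  constructor
  · rintro ⟨φ, hφC, hrange⟩
    have hφ : eval₂Hom g (φ.hom ∘ X) = φ.hom := by
      refine ringHom_ext (fun r => ?_) fun i => by simp
      simpa using congr($hφC.symm r)
    refine ⟨φ.hom ∘ X, ?_⟩
    rw [← coe_eval₂Hom, hφ, ← range_subset_iff]
    exact hrange
  · rintro ⟨v, hv⟩
    refine ⟨CommRingCat.ofHom (eval₂Hom g v), ?_, (range_subset_iff _).mpr hv⟩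
    ext r
    simp

/-- Let `R` be an LG-ring, `n ≥ 1`, and let `U` be a quasi-compact open
subscheme of affine `n`-space `𝔸ⁿ_R = Spec R[X₁,…,Xₙ]`.  Then `U` has an `R`-point over
`Spec R` if and only if for every maximal ideal `𝔪` of `R` it has an `(R/𝔪)`-point over
`Spec R`. -/
theorem lg_ring_qc_open_of_affine_space_has_point_iff
    {R : Type u} [CommRing R] (hR : IsLGRing R) (n : ℕ) (hn : 1 ≤ n)
    (U : (Spec (CommRingCat.of (MvPolynomial (Fin n) R))).Opens)
    (hU : IsCompact (U : Set (Spec (CommRingCat.of (MvPolynomial (Fin n) R))))) :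
    (∃ s : Spec (CommRingCat.of R) ⟶ U.toScheme,
        s ≫ U.ι ≫ Spec.map (CommRingCat.ofHom (algebraMap R (MvPolynomial (Fin n) R))) =
          𝟙 (Spec (CommRingCat.of R))) ↔
    (∀ 𝔪 : Ideal R, 𝔪.IsMaximal →
      ∃ s : Spec (CommRingCat.of (R ⧸ 𝔪)) ⟶ U.toScheme,
        s ≫ U.ι ≫ Spec.map (CommRingCat.ofHom (algebraMap R (MvPolynomial (Fin n) R))) =
          Spec.map (CommRingCat.ofHom (Ideal.Quotient.mk 𝔪))) := by
  obtain ⟨t, ht⟩ := PrimeSpectrum.isCompact_isOpen_iff.mp ⟨hU, U.isOpen⟩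
  have hUt : (U : Set (Spec (CommRingCat.of (MvPolynomial (Fin n) R)))) =
      (PrimeSpectrum.zeroLocus (Set.range ((↑) : t → MvPolynomial (Fin n) R)))ᶜ := by
    rw [Subtype.range_coe]
    exact ht.symm
  have : Nonempty (Fin n) := ⟨⟨0, hn⟩⟩
  refine ⟨fun ⟨s, hs⟩ 𝔪 _ => ⟨Spec.map (CommRingCat.ofHom (Ideal.Quotient.mk 𝔪)) ≫ s, ?_⟩,
    fun h => ?_⟩
  · rw [Category.assoc, hs, Category.comp_id]
  obtain ⟨a, ha⟩ := hR.exists_span_eval_eq_top _ fun 𝔪 h𝔪 =>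
    (exists_spec_lift_iff_span_eval₂_eq_top _ _ U hUt).mp (h 𝔪 h𝔪)
  rw [← Spec.map_id, ← CommRingCat.ofHom_id]
  exact (exists_spec_lift_iff_span_eval₂_eq_top (RingHom.id R) _ U hUt).mpr ⟨a, ha⟩
end

section
/- Let R be an LG-ring all of whose residue fields R/𝔪 (𝔪 a maximal ideal of R) are infinite (equivalently, R satisfies the primitive criterion). Let n ≥ 1 and let U be an open quasi-compact subscheme of affine n-space 𝔸ⁿ_R = Spec R[X₁,…,Xₙ] such that for every maximal ideal 𝔪 of R the fibre U ×_{Spec R} Spec(R/𝔪) is a dense open subset of 𝔸ⁿ_{R/𝔪}. Then U has an R-point. -/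
/-!
A quasi-compact open `U ⊆ 𝔸ⁿ_R` is the complement of `V(f₁, …, fₘ)`. Over each residue field
`k = R/𝔪` the fibre of `U` is nonempty, so some `fᵢ` survives in `k[X]`; hence
`g = ∑ fᵢ(X) Yᵢ` is a nonzero polynomial over the infinite field `k` and takes a unit value.
The LG property then gives `x, y` over `R` with `g(x, y)` a unit, so `f₁(x), …, fₘ(x)` generate
the unit ideal: the section `X = x` of `𝔸ⁿ_R → Spec R` lands in `U`.
-/

open AlgebraicGeometry CategoryTheory

universe u

lemma isUnit_of_forall_isMaximal_isUnit_mk {R : Type*} [CommRing R] {x : R}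
    (h : ∀ 𝔪 : Ideal R, 𝔪.IsMaximal → IsUnit (Ideal.Quotient.mk 𝔪 x)) : IsUnit x := by
  by_contra hx
  obtain ⟨𝔪, h𝔪, hx𝔪⟩ := exists_max_ideal_of_mem_nonunits hx
  have hunit := h 𝔪 h𝔪
  rw [Ideal.Quotient.eq_zero_iff_mem.mpr hx𝔪] at hunit
  exact not_isUnit_zero hunit

open MvPolynomial in
theorem IsLGRing.exists_isUnit_eval_s3 {R : Type*} [CommRing R] (hR : IsLGRing R)
    {σ : Type*} [Finite σ] (f : MvPolynomial σ R)
    (hf : ∀ 𝔪 : Ideal R, 𝔪.IsMaximal →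
      ∃ v : σ → R ⧸ 𝔪, IsUnit (eval v (map (Ideal.Quotient.mk 𝔪) f))) :
    ∃ u : σ → R, IsUnit (eval u f) := by
  obtain ⟨k, ⟨e⟩⟩ := Finite.exists_equiv_fin σ
  rcases isEmpty_or_nonempty σ with hσ | hσ
  · refine ⟨isEmptyElim, isUnit_of_forall_isMaximal_isUnit_mk fun 𝔪 h𝔪 => ?_⟩
    obtain ⟨v, hv⟩ := hf 𝔪 h𝔪
    rwa [map_eval, Subsingleton.elim (Ideal.Quotient.mk 𝔪 ∘ isEmptyElim) v]
  · have hk : 1 ≤ k := Fin.pos_iff_nonempty.mpr (e.nonempty_congr.mp hσ)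
    obtain ⟨u, hu⟩ := hR k hk (rename e f) fun 𝔪 h𝔪 => by
      obtain ⟨v, hv⟩ := hf 𝔪 h𝔪
      refine ⟨v ∘ e.symm, ?_⟩
      rwa [map_rename, eval_rename, Function.comp_assoc, e.symm_comp_self, Function.comp_id]
    exact ⟨u ∘ e, by rwa [eval_rename] at hu⟩

namespace MvPolynomial

variable {R σ ι : Type*} [CommRing R] [Fintype ι]

noncomputable def genericLinearCombination (f : ι → MvPolynomial σ R) :
    MvPolynomial (σ ⊕ ι) R :=
  ∑ i, rename Sum.inl (f i) * X (Sum.inr i)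

lemma map_genericLinearCombination {S : Type*} [CommRing S] (φ : R →+* S)
    (f : ι → MvPolynomial σ R) :
    map φ (genericLinearCombination f) = genericLinearCombination (map φ ∘ f) := by
  simp only [genericLinearCombination, map_sum, map_mul, map_rename, map_X, Function.comp_apply]

lemma eval_genericLinearCombination (f : ι → MvPolynomial σ R) (u : σ ⊕ ι → R) :
    eval u (genericLinearCombination f) = ∑ i, eval (u ∘ Sum.inl) (f i) * u (Sum.inr i) := by
  simp only [genericLinearCombination, map_sum, map_mul, eval_rename, eval_X]

lemma bind₁_genericLinearCombination_single [DecidableEq ι] (f : ι → MvPolynomial σ R) (i : ι) :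
    bind₁ (Sum.elim X (Pi.single i 1)) (genericLinearCombination f) = f i := by
  simp [genericLinearCombination, bind₁_rename, Sum.elim_comp_inl, Pi.single_apply]

lemma genericLinearCombination_ne_zero {f : ι → MvPolynomial σ R} {i : ι} (hi : f i ≠ 0) :
    genericLinearCombination f ≠ 0 := by
  classical
  intro h
  apply hi
  rw [← bind₁_genericLinearCombination_single f i, h, map_zero]

lemma span_range_eval_eq_top_of_isUnit_eval_genericLinearCombination
    {f : ι → MvPolynomial σ R} {u : σ ⊕ ι → R} (hu : IsUnit (eval u (genericLinearCombination f))) :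
    Ideal.span (Set.range fun i => eval (u ∘ Sum.inl) (f i)) = ⊤ := by
  refine Ideal.eq_top_of_isUnit_mem _ ?_ hu
  rw [eval_genericLinearCombination]
  exact Ideal.sum_mem _ fun i _ => Ideal.mul_mem_right _ _ (Ideal.subset_span ⟨i, rfl⟩)

lemma exists_isUnit_eval_of_ne_zero {k : Type*} [Field k] [Infinite k] {p : MvPolynomial σ k}
    (hp : p ≠ 0) : ∃ v : σ → k, IsUnit (eval v p) := by
  by_contra! h
  exact hp (funext fun v => by simpa using h v)

end MvPolynomial

namespace PrimeSpectrum

variable {A B : Type*} [CommRing A] [CommRing B] (φ : A →+* B) {s : Set A}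

lemma exists_mem_apply_ne_zero_of_comap_notMem_zeroLocus {x : PrimeSpectrum B}
    (hx : comap φ x ∉ zeroLocus s) : ∃ a ∈ s, φ a ≠ 0 := by
  obtain ⟨a, ha, hax⟩ := Set.not_subset.mp hx
  exact ⟨a, ha, fun h => hax (by simp [h])⟩

lemma range_comap_subset_compl_zeroLocus (hs : Ideal.span (φ '' s) = ⊤) :
    Set.range (comap φ) ⊆ (zeroLocus s)ᶜ := by
  rintro _ ⟨x, rfl⟩ hx
  rw [← Set.mem_preimage, preimage_comap_zeroLocus, ← zeroLocus_span, hs, Submodule.top_coe,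
    zeroLocus_univ] at hx
  exact hx

end PrimeSpectrum

open AlgebraicGeometry in
lemma exists_section_of_range_comap_subset {R A : Type u} [CommRing R] [CommRing A] [Algebra R A]
    (U : (Spec (CommRingCat.of A)).Opens) (φ : A →ₐ[R] R)
    (hφ : Set.range (PrimeSpectrum.comap (φ : A →+* R)) ⊆ (U : Set (Spec (CommRingCat.of A)))) :
    ∃ s : Spec (CommRingCat.of R) ⟶ U.toScheme,
      s ≫ U.ι ≫ Spec.map (CommRingCat.ofHom (algebraMap R A)) = 𝟙 (Spec (CommRingCat.of R)) := by
  let p : Spec (CommRingCat.of R) ⟶ Spec (CommRingCat.of A) := Spec.map (CommRingCat.ofHom φ)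
  have hp : Set.range p.base ⊆ Set.range U.ι.base := by
    rw [Scheme.Opens.range_ι]
    exact hφ
  refine ⟨IsOpenImmersion.lift U.ι p hp, ?_⟩
  rw [← Category.assoc, IsOpenImmersion.lift_fac, ← Spec.map_comp, ← CommRingCat.ofHom_comp,
    φ.comp_algebraMap, Algebra.algebraMap_self, CommRingCat.ofHom_id, Spec.map_id]

open MvPolynomial in
theorem lg_ring_primitive_dense_qc_open_has_point_general
    {R : Type u} [CommRing R] (hR : IsLGRing R)
    (hres : ∀ 𝔪 : Ideal R, 𝔪.IsMaximal → Infinite (R ⧸ 𝔪))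
    (n : ℕ)
    (U : (Spec (CommRingCat.of (MvPolynomial (Fin n) R))).Opens)
    (hU : IsCompact (U : Set (Spec (CommRingCat.of (MvPolynomial (Fin n) R)))))
    (hdense : ∀ 𝔪 : Ideal R, 𝔪.IsMaximal →
      Dense ((Spec.map (CommRingCat.ofHom
          (MvPolynomial.map (σ := Fin n) (Ideal.Quotient.mk 𝔪)))).base ⁻¹'
        (U : Set (Spec (CommRingCat.of (MvPolynomial (Fin n) R)))))) :
    ∃ s : Spec (CommRingCat.of R) ⟶ U.toScheme,
      s ≫ U.ι ≫ Spec.map (CommRingCat.ofHom (algebraMap R (MvPolynomial (Fin n) R))) =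
        𝟙 (Spec (CommRingCat.of R)) := by
  obtain ⟨t, ht⟩ := PrimeSpectrum.isCompact_isOpen_iff.mp ⟨hU, U.2⟩
  set g := genericLinearCombination fun a : t => (a : MvPolynomial (Fin n) R)
  have hg : ∀ 𝔪 : Ideal R, 𝔪.IsMaximal →
      ∃ v, IsUnit (eval v (map (Ideal.Quotient.mk 𝔪) g)) := by
    intro 𝔪 h𝔪
    let := Ideal.Quotient.field 𝔪
    have := hres 𝔪 h𝔪
    obtain ⟨x, hx⟩ := (hdense 𝔪 h𝔪).nonempty
    rw [Set.mem_preimage, ← ht] at hx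
    obtain ⟨a, ha, ha0⟩ := PrimeSpectrum.exists_mem_apply_ne_zero_of_comap_notMem_zeroLocus _ hx
    rw [map_genericLinearCombination]
    exact exists_isUnit_eval_of_ne_zero (genericLinearCombination_ne_zero (i := ⟨a, ha⟩) ha0)
  obtain ⟨u, hu⟩ := hR.exists_isUnit_eval_s3 g hg
  refine exists_section_of_range_comap_subset U (aeval (u ∘ Sum.inl)) ?_
  rw [← ht]
  refine PrimeSpectrum.range_comap_subset_compl_zeroLocus _ ?_
  rw [Set.image_eq_range]
  exact span_range_eval_eq_top_of_isUnit_eval_genericLinearCombination hu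

/-- Let `R` be an LG-ring all of whose residue fields at maximal ideals
are infinite (the primitive criterion).  Let `U` be a quasi-compact open subscheme of
`𝔸ⁿ_R = Spec R[X₁,…,Xₙ]` such that for every maximal ideal `𝔪` the fibre of `U` over
`Spec (R/𝔪)` — i.e. the preimage of `U` under `𝔸ⁿ_{R/𝔪} → 𝔸ⁿ_R` — is dense in
`𝔸ⁿ_{R/𝔪}`.  Then `U` has an `R`-point. -/
theorem lg_ring_primitive_dense_qc_open_has_point
    {R : Type u} [CommRing R] (hR : IsLGRing R)
    (hres : ∀ 𝔪 : Ideal R, 𝔪.IsMaximal → Infinite (R ⧸ 𝔪))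
    (n : ℕ) (hn : 1 ≤ n)
    (U : (Spec (CommRingCat.of (MvPolynomial (Fin n) R))).Opens)
    (hU : IsCompact (U : Set (Spec (CommRingCat.of (MvPolynomial (Fin n) R)))))
    (hdense : ∀ 𝔪 : Ideal R, 𝔪.IsMaximal →
      Dense ((Spec.map (CommRingCat.ofHom
          (MvPolynomial.map (σ := Fin n) (Ideal.Quotient.mk 𝔪)))).base ⁻¹'
        (U : Set (Spec (CommRingCat.of (MvPolynomial (Fin n) R)))))) :
    ∃ s : Spec (CommRingCat.of R) ⟶ U.toScheme,
      s ≫ U.ι ≫ Spec.map (CommRingCat.ofHom (algebraMap R (MvPolynomial (Fin n) R))) =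
        𝟙 (Spec (CommRingCat.of R)) :=
  lg_ring_primitive_dense_qc_open_has_point_general hR hres n U hU hdense
end
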